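/- arXiv:2405.06871 — 6 statements merged into one kernel-verified Lean document; each statement's English description precedes it below -/
import Mathlib

section
/- Let U satisfy A1 and be strongly convex outside a ball with constants m, R > 0 (assumption A2). Then for every m' with 0 < m' < m there exists a constant C₀ > 0 (depending on m, m', R, C₁ and d) such that ⟨x, ∇U(x)⟩ ≥ m'|x|² − C₀ for all x ∈ ℝ^d. -/
open RealInnerProductSpace Set

/-!
Along the ray `t ↦ t • x`, the directional derivative `t ↦ DU(t • x) x` grows at rate
`D²U(t • x)[x, x] ≥ m ‖x‖²` once `‖t • x‖ ≥ R`. Starting from the sphere of radius `R`, where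
`⟪x, ∇U⟫ ≥ -G ‖x‖` with `G = sup_{B_R} ‖∇U‖`, this gives `⟪x, ∇U x⟫ ≥ m ‖x‖² - (m R + G) ‖x‖`
for all `x`, and the linear term is absorbed by the spare quadratic margin `(m - m') ‖x‖²`.
-/

section Ray

variable {E : Type*} [NormedAddCommGroup E] [NormedSpace ℝ E] {f : E → ℝ}

theorem hasDerivAt_fderiv_smul_apply (hf : Differentiable ℝ (fderiv ℝ f)) (v : E) (t : ℝ) :
    HasDerivAt (fun τ : ℝ => fderiv ℝ f (τ • v) v) (iteratedFDeriv ℝ 2 f (t • v) ![v, v]) t := by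
  have hray : HasDerivAt (fun τ : ℝ => τ • v) v t := by
    simpa using (hasDerivAt_id t).smul_const v
  have happly : HasFDerivAt (fun y => fderiv ℝ f y v)
      ((ContinuousLinearMap.apply ℝ ℝ v).comp (fderiv ℝ (fderiv ℝ f) (t • v))) (t • v) :=
    (ContinuousLinearMap.apply ℝ ℝ v).hasFDerivAt.comp _ (hf (t • v)).hasFDerivAt
  rw [iteratedFDeriv_two_apply]
  exact happly.comp_hasDerivAt t hray

theorem mul_sub_le_fderiv_smul_apply_sub (hf : Differentiable ℝ (fderiv ℝ f)) {v : E}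
    {c s t : ℝ} (hst : s ≤ t) (hc : ∀ τ ∈ Ioo s t, c ≤ iteratedFDeriv ℝ 2 f (τ • v) ![v, v]) :
    c * (t - s) ≤ fderiv ℝ f (t • v) v - fderiv ℝ f (s • v) v := by
  have hderiv := hasDerivAt_fderiv_smul_apply hf v
  refine (convex_Icc s t).mul_sub_le_image_sub_of_le_deriv
    (fun τ _ => (hderiv τ).continuousAt.continuousWithinAt)
    (fun τ _ => (hderiv τ).differentiableAt.differentiableWithinAt) ?_
    s (left_mem_Icc.2 hst) t (right_mem_Icc.2 hst) hst
  intro τ hτ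
  rw [interior_Icc] at hτ
  rw [(hderiv τ).deriv]
  exact hc τ hτ

end Ray

theorem mul_norm_sq_sub_le_inner_gradient {E : Type*} [NormedAddCommGroup E]
    [InnerProductSpace ℝ E] [CompleteSpace E] {U : E → ℝ} (hU : Differentiable ℝ (fderiv ℝ U))
    {m R G : ℝ} (hm : 0 ≤ m) (hR : 0 < R) (hG : ∀ y, ‖y‖ ≤ R → ‖gradient U y‖ ≤ G)
    (hconv : ∀ y, R ≤ ‖y‖ → ∀ v, m * ‖v‖ ^ 2 ≤ iteratedFDeriv ℝ 2 U y ![v, v]) (x : E) :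
    m * ‖x‖ ^ 2 - (m * R + G) * ‖x‖ ≤ ⟪x, gradient U x⟫ := by
  have hinner : ∀ y, ⟪x, gradient U y⟫ = fderiv ℝ U y x := fun y => by simp
  have hball : ∀ y, ‖y‖ ≤ R → -(G * ‖x‖) ≤ ⟪x, gradient U y⟫ := fun y hy =>
    calc -(G * ‖x‖) ≤ -(‖x‖ * ‖gradient U y‖) := by
          rw [mul_comm]; gcongr; exact hG y hy
      _ ≤ ⟪x, gradient U y⟫ := neg_le_of_abs_le (abs_real_inner_le_norm _ _)
  rcases le_or_gt ‖x‖ R with hxR | hRx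
  · have hneg : m * ‖x‖ * (‖x‖ - R) ≤ 0 :=
      mul_nonpos_of_nonneg_of_nonpos (by positivity) (by linarith)
    linarith [hball x hxR]
  · have hx : 0 < ‖x‖ := hR.trans hRx
    set t₀ := R / ‖x‖
    have ht₀ : ‖t₀ • x‖ = R := by
      rw [norm_smul, Real.norm_of_nonneg (by positivity), div_mul_cancel₀ _ hx.ne']
    have hτR : ∀ τ ∈ Ioo t₀ 1, R ≤ ‖τ • x‖ := fun τ hτ => by
      have hτ₀ : 0 < τ := (by positivity : 0 < t₀).trans hτ.1
      rw [norm_smul, Real.norm_of_nonneg hτ₀.le, ← div_le_iff₀ hx]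
      exact hτ.1.le
    have hgrowth := mul_sub_le_fderiv_smul_apply_sub hU ((div_le_one hx).2 hRx.le : t₀ ≤ 1)
      fun τ hτ => hconv _ (hτR τ hτ) x
    rw [one_smul, ← hinner, ← hinner] at hgrowth
    have hlin : m * ‖x‖ ^ 2 * (1 - t₀) = m * ‖x‖ ^ 2 - m * R * ‖x‖ := by
      simp only [t₀]
      field_simp
    linarith [hball _ ht₀.le]

theorem mul_sq_sub_div_le_mul_sq_sub_mul {a b : ℝ} (hba : b < a) (K s : ℝ) :
    b * s ^ 2 - K ^ 2 / (4 * (a - b)) ≤ a * s ^ 2 - K * s := by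
  have hδ : 0 < a - b := sub_pos.2 hba
  have hsq : K ^ 2 / (4 * (a - b)) + (a - b) * s ^ 2 - K * s
      = (2 * (a - b) * s - K) ^ 2 / (4 * (a - b)) := by
    field_simp
    ring
  have hnonneg : 0 ≤ (2 * (a - b) * s - K) ^ 2 / (4 * (a - b)) := by positivity
  linarith

theorem statement0_general (d : ℕ) (U : EuclideanSpace ℝ (Fin d) → ℝ)
    (C₁ m R : ℝ) (hC₁ : 0 < C₁) (hm : 0 < m) (hR : 0 < R)
    -- A1
    (hU : ContDiff ℝ 3 U)
    (hU1 : ∀ x, ‖gradient U x‖ ≤ C₁ * (‖x‖ + 1))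
    -- A2: strong convexity outside the ball of radius R
    (hconv : ∀ x, R ≤ ‖x‖ → ∀ y, m * ‖y‖ ^ 2 ≤ iteratedFDeriv ℝ 2 U x ![y, y]) :
    ∀ m', 0 < m' → m' < m → ∃ C₀ > 0, ∀ x : EuclideanSpace ℝ (Fin d),
      m' * ‖x‖ ^ 2 - C₀ ≤ ⟪x, gradient U x⟫ := by
  intro m' _ hm'm
  have hU' : Differentiable ℝ (fderiv ℝ U) :=
    (hU.fderiv_right (by norm_num : (2 : WithTop ℕ∞) + 1 ≤ 3)).differentiable (by norm_num)
  have hG : ∀ y, ‖y‖ ≤ R → ‖gradient U y‖ ≤ C₁ * (R + 1) := fun y hy =>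
    (hU1 y).trans (by gcongr)
  set K := m * R + C₁ * (R + 1)
  refine ⟨K ^ 2 / (4 * (m - m')) + 1, by positivity, fun x => ?_⟩
  linarith [mul_norm_sq_sub_le_inner_gradient hU' hm.le hR hG hconv x,
    mul_sq_sub_div_le_mul_sq_sub_mul hm'm K ‖x‖]

/-- Under A1 and A2 (strong convexity outside a ball with constants `m, R > 0`),
for every `0 < m' < m` there exists `C₀ > 0` such that
`⟨x, ∇U(x)⟩ ≥ m'|x|² − C₀` for all `x ∈ ℝ^d`. -/
theorem statement0 (d : ℕ) (hd : 1 ≤ d) (U : EuclideanSpace ℝ (Fin d) → ℝ)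
    (C₁ m R : ℝ) (hC₁ : 0 < C₁) (hm : 0 < m) (hR : 0 < R)
    -- A1
    (hU : ContDiff ℝ 3 U)
    (hU0 : ∀ x, |U x| ≤ C₁ * (‖x‖ + 1) ^ 2)
    (hU1 : ∀ x, ‖gradient U x‖ ≤ C₁ * (‖x‖ + 1))
    (hU2 : ∀ x, ‖iteratedFDeriv ℝ 2 U x‖ ≤ C₁)
    (hU3 : ∀ x, ‖iteratedFDeriv ℝ 3 U x‖ ≤ C₁)
    -- A2: strong convexity outside the ball of radius R
    (hconv : ∀ x, R ≤ ‖x‖ → ∀ y, m * ‖y‖ ^ 2 ≤ iteratedFDeriv ℝ 2 U x ![y, y]) :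
    ∀ m', 0 < m' → m' < m → ∃ C₀ > 0, ∀ x : EuclideanSpace ℝ (Fin d),
      m' * ‖x‖ ^ 2 - C₀ ≤ ⟪x, gradient U x⟫ :=
  statement0_general d U C₁ m R hC₁ hm hR hU hU1 hconv
end

section
/- Assume A1 and A2 and let H(x,v) = γ|x|² + 2⟨x,v⟩ + |v|². There exists γ₀ > 0 such that for every γ ≥ γ₀ there exist constants a, b > 0 with −2((γ−1)|v|² + ⟨x,∇U(x)⟩ + ⟨v,∇U(x)⟩) + 2γd ≤ −a·H(x,v) + b for all x, v ∈ ℝ^d. (The left-hand side is the generator L = v·∇_x − (∇U(x)+γv)·∇_v + γΔ_v of the underdamped Langevin dynamics applied to H, so this is the Lyapunov inequality LH ≤ −aH + b.) -/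
/-!
Integrating the Hessian bound `∇²U ⪰ m` along the segment from `(R/|x|)·x` to `x` gives the
coercivity `⟨x, ∇U(x)⟩ ≥ (m/2)|x|² − K`. Together with the linear growth of `∇U` and Young's
inequality, the drift is then at most `−(m/2)|x|² − |v|² + const` once `γ ≥ 2 + 2C₁²/m`, and
since `H ≤ (γ + 1)|x|² + 2|v|²` this is `≤ −aH + b` for `a = m / (2(γ + 1))`.
-/

open RealInnerProductSpace

section

variable {E : Type*} [NormedAddCommGroup E]

lemma mul_one_sub_le_fderiv_sub_fderiv_smul [NormedSpace ℝ E] {f : E → ℝ}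
    (hf : ContDiff ℝ 2 f) {x : E} {s c : ℝ} (hs : s ≤ 1)
    (hc : ∀ t ∈ Set.Icc s 1, c ≤ iteratedFDeriv ℝ 2 f (t • x) ![x, x]) :
    c * (1 - s) ≤ fderiv ℝ f x x - fderiv ℝ f (s • x) x := by
  have hdf : Differentiable ℝ (fderiv ℝ f) :=
    (hf.fderiv_right (m := 1) (by norm_num)).differentiable one_ne_zero
  have hφ : ∀ t : ℝ, HasDerivAt (fun t : ℝ ↦ fderiv ℝ f (t • x) x)
      (fderiv ℝ (fderiv ℝ f) (t • x) x x) t := fun t ↦ by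
    have hline : HasDerivAt (fun t : ℝ ↦ t • x) x t := by
      simpa using (hasDerivAt_id t).smul_const x
    simpa using ((hdf _).hasFDerivAt.comp_hasDerivAt t hline).clm_apply (hasDerivAt_const t x)
  have := (convex_Icc s 1).mul_sub_le_image_sub_of_le_deriv
    (fun t _ ↦ (hφ t).continuousAt.continuousWithinAt)
    (fun t _ ↦ (hφ t).differentiableAt.differentiableWithinAt)
    (fun t ht ↦ by
      simpa [(hφ t).deriv, iteratedFDeriv_two_apply] using
        hc t (interior_subset ht))
    s (Set.left_mem_Icc.2 hs) 1 (Set.right_mem_Icc.2 hs) hs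
  simpa using this

variable [InnerProductSpace ℝ E]

lemma neg_mul_le_real_inner_of_norm_le (x : E) {g : E} {c : ℝ} (hg : ‖g‖ ≤ c) :
    -(‖x‖ * c) ≤ ⟪x, g⟫ :=
  (neg_le_neg ((abs_real_inner_le_norm x g).trans
    (mul_le_mul_of_nonneg_left hg (norm_nonneg x)))).trans (neg_abs_le _)

section Gradient

variable [CompleteSpace E] {f : E → ℝ} {C m R : ℝ}

lemma inner_gradient_ge_of_lt_norm (hf : ContDiff ℝ 2 f) (hR : 0 ≤ R)
    (hgrad : ∀ x, ‖gradient f x‖ ≤ C * (‖x‖ + 1))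
    (hconv : ∀ x, R ≤ ‖x‖ → ∀ y, m * ‖y‖ ^ 2 ≤ iteratedFDeriv ℝ 2 f x ![y, y])
    {x : E} (hx : R < ‖x‖) :
    m * ‖x‖ ^ 2 - (m * R + C * (R + 1)) * ‖x‖ ≤ ⟪x, gradient f x⟫ := by
  have hx₀ : 0 < ‖x‖ := hR.trans_lt hx
  set s := R / ‖x‖
  have hs : 0 ≤ s := by positivity
  have hsx : ‖s • x‖ = R := by
    rw [norm_smul, Real.norm_of_nonneg hs, div_mul_cancel₀ _ hx₀.ne']
  have hmvt := mul_one_sub_le_fderiv_sub_fderiv_smul (c := m * ‖x‖ ^ 2) hf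
    ((div_le_one hx₀).2 hx.le) fun t ht ↦ hconv _ (by
      rw [norm_smul, Real.norm_of_nonneg (hs.trans ht.1)]
      calc R = s * ‖x‖ := (div_mul_cancel₀ _ hx₀.ne').symm
        _ ≤ t * ‖x‖ := by gcongr; exact ht.1) x
  have hstart := neg_mul_le_real_inner_of_norm_le x (hsx ▸ hgrad (s • x))
  have hsm : m * ‖x‖ ^ 2 * (1 - s) = m * ‖x‖ ^ 2 - m * R * ‖x‖ := by
    simp only [s]; field_simp
  simp only [inner_gradient_right, conj_trivial] at hstart ⊢
  linarith

lemma exists_inner_gradient_ge (hf : ContDiff ℝ 2 f) (hm : 0 < m) (hR : 0 ≤ R)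
    (hgrad : ∀ x, ‖gradient f x‖ ≤ C * (‖x‖ + 1))
    (hconv : ∀ x, R ≤ ‖x‖ → ∀ y, m * ‖y‖ ^ 2 ≤ iteratedFDeriv ℝ 2 f x ![y, y]) :
    ∃ K, ∀ x, m / 2 * ‖x‖ ^ 2 - K ≤ ⟪x, gradient f x⟫ := by
  have hC : 0 ≤ C := by simpa using (norm_nonneg _).trans (hgrad 0)
  set A := m * R + C * (R + 1)
  refine ⟨A ^ 2 / (2 * m) + C * (R + 1) * R + m / 2 * R ^ 2, fun x ↦ ?_⟩
  have hA : 0 ≤ A ^ 2 / (2 * m) := by positivity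
  rcases lt_or_ge R ‖x‖ with hx | hx
  · have hamgm : A * ‖x‖ - m / 2 * ‖x‖ ^ 2 ≤ A ^ 2 / (2 * m) := by
      rw [le_div_iff₀ (by positivity)]
      nlinarith [sq_nonneg (m * ‖x‖ - A)]
    nlinarith [inner_gradient_ge_of_lt_norm hf hR hgrad hconv hx]
  · have hin : ‖x‖ * (C * (‖x‖ + 1)) ≤ C * (R + 1) * R := by
      have : ‖x‖ * (‖x‖ + 1) ≤ R * (R + 1) := by gcongr
      nlinarith
    have := neg_mul_le_real_inner_of_norm_le x (hgrad x)
    have : m / 2 * ‖x‖ ^ 2 ≤ m / 2 * R ^ 2 := by gcongr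
    linarith

end Gradient

lemma langevin_drift_le {x v g : E} {C m K γ : ℝ} (hm : 0 < m) (hγ : 2 + 2 * C ^ 2 / m ≤ γ)
    (hxg : m / 2 * ‖x‖ ^ 2 - K ≤ ⟪x, g⟫) (hg : ‖g‖ ≤ C * (‖x‖ + 1)) :
    -2 * ((γ - 1) * ‖v‖ ^ 2 + ⟪x, g⟫ + ⟪v, g⟫) ≤
      -(m / 2 * ‖x‖ ^ 2 + ‖v‖ ^ 2) + (2 * K + C ^ 2) := by
  have hvg := neg_mul_le_real_inner_of_norm_le v hg
  have hyoung : 2 * C * ‖v‖ * ‖x‖ ≤ m / 4 * ‖x‖ ^ 2 + 4 * C ^ 2 / m * ‖v‖ ^ 2 := by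
    have : 0 ≤ (m / 2 * ‖x‖ - 2 * C * ‖v‖) ^ 2 / m := by positivity
    have hexp : (m / 2 * ‖x‖ - 2 * C * ‖v‖) ^ 2 / m =
        m / 4 * ‖x‖ ^ 2 + 4 * C ^ 2 / m * ‖v‖ ^ 2 - 2 * C * ‖v‖ * ‖x‖ := by
      field_simp; ring
    linarith
  have hγv : (2 + 4 * C ^ 2 / m) * ‖v‖ ^ 2 ≤ 2 * (γ - 1) * ‖v‖ ^ 2 := by
    have : 4 * C ^ 2 / m = 2 * (2 * C ^ 2 / m) := by ring
    gcongr; linarith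
  linarith [sq_nonneg (‖v‖ - C), mul_nonneg hm.le (sq_nonneg ‖x‖)]

lemma mul_lyapunov_le (x v : E) {m γ : ℝ} (hm : 0 < m) (hmγ : m ≤ γ + 1) :
    m / (2 * (γ + 1)) * (γ * ‖x‖ ^ 2 + 2 * ⟪x, v⟫ + ‖v‖ ^ 2) ≤ m / 2 * ‖x‖ ^ 2 + ‖v‖ ^ 2 := by
  have hγ : 0 < γ + 1 := hm.trans_le hmγ
  have hxv : 2 * ⟪x, v⟫ ≤ ‖x‖ ^ 2 + ‖v‖ ^ 2 :=
    (mul_le_mul_of_nonneg_left (real_inner_le_norm x v) zero_le_two).trans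
      (by simpa [mul_assoc] using two_mul_le_add_sq ‖x‖ ‖v‖)
  calc m / (2 * (γ + 1)) * (γ * ‖x‖ ^ 2 + 2 * ⟪x, v⟫ + ‖v‖ ^ 2)
      ≤ m / (2 * (γ + 1)) * ((γ + 1) * ‖x‖ ^ 2 + 2 * ‖v‖ ^ 2) :=
        mul_le_mul_of_nonneg_left (by linarith) (by positivity)
    _ = m / 2 * ‖x‖ ^ 2 + m / (γ + 1) * ‖v‖ ^ 2 := by field_simp
    _ ≤ m / 2 * ‖x‖ ^ 2 + ‖v‖ ^ 2 := by
      gcongr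
      exact mul_le_of_le_one_left (sq_nonneg _) ((div_le_one hγ).2 hmγ)

end

theorem statement2_general (d : ℕ) (U : EuclideanSpace ℝ (Fin d) → ℝ)
    (C₁ m R : ℝ) (hm : 0 < m) (hR : 0 < R)
    -- A1
    (hU : ContDiff ℝ 3 U)
    (hU1 : ∀ x, ‖gradient U x‖ ≤ C₁ * (‖x‖ + 1))
    -- A2: strong convexity outside the ball of radius R
    (hconv : ∀ x, R ≤ ‖x‖ → ∀ y, m * ‖y‖ ^ 2 ≤ iteratedFDeriv ℝ 2 U x ![y, y]) :
    ∃ γ₀ > 0, ∀ γ ≥ γ₀, ∃ a > 0, ∃ b > 0, ∀ x v : EuclideanSpace ℝ (Fin d),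
      -2 * ((γ - 1) * ‖v‖ ^ 2 + ⟪x, gradient U x⟫ + ⟪v, gradient U x⟫) + 2 * γ * d ≤
        -a * (γ * ‖x‖ ^ 2 + 2 * ⟪x, v⟫ + ‖v‖ ^ 2) + b := by
  obtain ⟨K, hK⟩ := exists_inner_gradient_ge (hU.of_le (by norm_num)) hm hR.le hU1 hconv
  have hC : 0 ≤ 2 * C₁ ^ 2 / m := by positivity
  refine ⟨2 + 2 * C₁ ^ 2 / m + m, by positivity, fun γ hγ ↦ ?_⟩
  have hγ₀ : 0 ≤ γ := by linarith
  refine ⟨m / (2 * (γ + 1)), by positivity, 2 * |K| + C₁ ^ 2 + 2 * γ * d + 1, by positivity,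
    fun x v ↦ ?_⟩
  have hdrift := langevin_drift_le (v := v) hm ((le_add_of_nonneg_right hm.le).trans hγ)
    (hK x) (hU1 x)
  have hH := mul_lyapunov_le x v hm (γ := γ) (by linarith)
  linarith [le_abs_self K]

/-- Under A1 and A2, with `H(x,v) = γ|x|² + 2⟨x,v⟩ + |v|²`, there exists
`γ₀ > 0` such that for every `γ ≥ γ₀` there are `a, b > 0` with
`−2((γ−1)|v|² + ⟨x,∇U(x)⟩ + ⟨v,∇U(x)⟩) + 2γd ≤ −a·H(x,v) + b` for all `x, v ∈ ℝ^d`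
(the Lyapunov inequality `LH ≤ −aH + b` for the underdamped Langevin generator). -/
theorem statement2 (d : ℕ) (hd : 1 ≤ d) (U : EuclideanSpace ℝ (Fin d) → ℝ)
    (C₁ m R : ℝ) (hC₁ : 0 < C₁) (hm : 0 < m) (hR : 0 < R)
    -- A1
    (hU : ContDiff ℝ 3 U)
    (hU0 : ∀ x, |U x| ≤ C₁ * (‖x‖ + 1) ^ 2)
    (hU1 : ∀ x, ‖gradient U x‖ ≤ C₁ * (‖x‖ + 1))
    (hU2 : ∀ x, ‖iteratedFDeriv ℝ 2 U x‖ ≤ C₁)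
    (hU3 : ∀ x, ‖iteratedFDeriv ℝ 3 U x‖ ≤ C₁)
    -- A2: strong convexity outside the ball of radius R
    (hconv : ∀ x, R ≤ ‖x‖ → ∀ y, m * ‖y‖ ^ 2 ≤ iteratedFDeriv ℝ 2 U x ![y, y]) :
    ∃ γ₀ > 0, ∀ γ ≥ γ₀, ∃ a > 0, ∃ b > 0, ∀ x v : EuclideanSpace ℝ (Fin d),
      -2 * ((γ - 1) * ‖v‖ ^ 2 + ⟪x, gradient U x⟫ + ⟪v, gradient U x⟫) + 2 * γ * d ≤
        -a * (γ * ‖x‖ ^ 2 + 2 * ⟪x, v⟫ + ‖v‖ ^ 2) + b :=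
  statement2_general d U C₁ m R hm hR hU hU1 hconv
end

section
/- Let d ≥ 1, 0 < m ≤ C₁, and γ ≥ C₁ + 1. Let S be the 2d×2d block matrix [[γI_d, I_d],[I_d, I_d]]. Then there exists λ > 0, depending only on m, C₁ and γ, such that for every symmetric matrix H ∈ ℝ^{d×d} with mI_d ⪯ H ⪯ C₁I_d, the block matrix A = [[0_d, −I_d],[H, γI_d]] satisfies: SA + AᵀS = [[2H, H],[H, 2(γ−1)I_d]], this matrix is ⪰ [[mI_d, 0_d],[0_d, C₁I_d]], and consequently SA + AᵀS − λS is positive semidefinite. -/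
/-!
Write `K = SA + AᵀS` and `D = diag(mI, C₁I)`. Then
`K - D = diag(H - mI, (C₁I - H) + 2(γ - 1 - C₁)I) + [[H, H], [H, H]]`, and with `λ = m / (γ + 1)`,
`D - λS = λ [[I, -I], [-I, I]] + diag(0, (C₁ - 2λ)I)`. Every summand is positive semidefinite
(the blocks `[[P, ±P], [±P, P]]` are congruent to `P`), so `K - λS = (K - D) + (D - λS)` is too.
-/

open Matrix

namespace Matrix.PosSemidef

variable {R : Type*} [CommRing R] [PartialOrder R] [StarRing R]
  {m n : Type*} [Fintype m] [Fintype n]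

theorem fromBlocks_zero [AddLeftMono R] {P : Matrix m m R} {Q : Matrix n n R} (hP : P.PosSemidef)
    (hQ : Q.PosSemidef) : (fromBlocks P 0 0 Q).PosSemidef := by
  classical
  have h₁ := hP.mul_mul_conjTranspose_same (fromRows (1 : Matrix m m R) (0 : Matrix n m R))
  have h₂ := hQ.mul_mul_conjTranspose_same (fromRows (0 : Matrix m n R) (1 : Matrix n n R))
  convert h₁.add h₂ using 1
  ext (i | i) (j | j) <;> simp [fromRows_mul, conjTranspose_fromRows_eq_fromCols_conjTranspose]

theorem fromBlocks_self {P : Matrix n n R} (hP : P.PosSemidef) :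
    (fromBlocks P P P P).PosSemidef := by
  classical
  simpa [fromRows_mul, conjTranspose_fromRows_eq_fromCols_conjTranspose,
    fromRows_fromCols_eq_fromBlocks] using
    hP.mul_mul_conjTranspose_same (fromRows (1 : Matrix n n R) (1 : Matrix n n R))

theorem fromBlocks_neg_self {P : Matrix n n R} (hP : P.PosSemidef) :
    (fromBlocks P (-P) (-P) P).PosSemidef := by
  classical
  simpa [fromRows_mul, conjTranspose_fromRows_eq_fromCols_conjTranspose,
    fromRows_fromCols_eq_fromBlocks] using
    hP.mul_mul_conjTranspose_same (fromRows (1 : Matrix n n R) (-1 : Matrix n n R))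

end Matrix.PosSemidef

theorem Matrix.fromBlocks_mul_add_transpose_mul_fromBlocks {R n : Type*} [CommRing R]
    [Fintype n] [DecidableEq n] {H : Matrix n n R} (hH : H.IsSymm) (γ : R) :
    fromBlocks (γ • 1) 1 1 1 * fromBlocks 0 (-1) H (γ • 1) +
        (fromBlocks 0 (-1) H (γ • 1))ᵀ * fromBlocks (γ • 1) 1 1 1 =
      fromBlocks ((2 : R) • H) H H ((2 * (γ - 1)) • 1) := by
  simp only [fromBlocks_transpose, fromBlocks_multiply, fromBlocks_add, hH.eq, transpose_zero,
    transpose_neg, transpose_one, transpose_smul, mul_smul, one_mul, mul_one,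
    zero_mul, mul_zero, mul_neg, neg_mul, zero_add, fromBlocks_inj]
  refine ⟨?_, ?_, ?_, ?_⟩ <;> module

section

variable {n : Type*} [Fintype n] [DecidableEq n]

theorem posSemidef_fromBlocks_two_smul_sub_fromBlocks_smul_one {H : Matrix n n ℝ} {m C₁ γ : ℝ}
    (hm : 0 ≤ m) (hγ : C₁ + 1 ≤ γ) (hmH : (H - m • 1).PosSemidef) (hHC : (C₁ • 1 - H).PosSemidef) :
    (fromBlocks ((2 : ℝ) • H) H H ((2 * (γ - 1)) • 1) -
      fromBlocks (m • 1) 0 0 (C₁ • (1 : Matrix n n ℝ))).PosSemidef := by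
  have hdecomp : fromBlocks ((2 : ℝ) • H) H H ((2 * (γ - 1)) • 1) -
      fromBlocks (m • 1) 0 0 (C₁ • (1 : Matrix n n ℝ)) =
      fromBlocks (H - m • 1) 0 0 ((C₁ • 1 - H) + (2 * (γ - 1) - 2 * C₁) • 1) +
        fromBlocks H H H H := by
    rw [sub_eq_add_neg, fromBlocks_neg, fromBlocks_add, fromBlocks_add, fromBlocks_inj]
    refine ⟨?_, ?_, ?_, ?_⟩ <;> module
  have hH : H.PosSemidef := by simpa using hmH.add (PosSemidef.one.smul hm)
  rw [hdecomp]
  exact (hmH.fromBlocks_zero (hHC.add (PosSemidef.one.smul (by linarith)))).add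
    hH.fromBlocks_self

theorem posSemidef_fromBlocks_smul_one_sub_smul_fromBlocks {a b γ lam : ℝ} (hlam : 0 ≤ lam)
    (ha : lam * (γ + 1) ≤ a) (hb : 2 * lam ≤ b) :
    (fromBlocks (a • 1) 0 0 (b • 1) - lam • fromBlocks (γ • 1) 1 1 1 :
      Matrix (n ⊕ n) (n ⊕ n) ℝ).PosSemidef := by
  have hdecomp : (fromBlocks (a • 1) 0 0 (b • 1) - lam • fromBlocks (γ • 1) 1 1 1 :
      Matrix (n ⊕ n) (n ⊕ n) ℝ) = lam • fromBlocks 1 (-1) (-1) 1 +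
        fromBlocks ((a - lam * (γ + 1)) • 1) 0 0 ((b - 2 * lam) • 1) := by
    rw [sub_eq_add_neg, fromBlocks_smul, fromBlocks_smul, fromBlocks_neg, fromBlocks_add,
      fromBlocks_add, fromBlocks_inj]
    refine ⟨?_, ?_, ?_, ?_⟩ <;> module
  rw [hdecomp]
  exact (PosSemidef.one.fromBlocks_neg_self.smul hlam).add
    ((PosSemidef.one.smul (sub_nonneg.2 ha)).fromBlocks_zero
      (PosSemidef.one.smul (sub_nonneg.2 hb)))

end

theorem statement3_general (d : ℕ) (m C₁ γ : ℝ) (hm : 0 < m) (hmC : m ≤ C₁)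
    (hγ : C₁ + 1 ≤ γ) :
    ∃ lam > (0 : ℝ), ∀ H : Matrix (Fin d) (Fin d) ℝ, H.IsSymm →
      (H - m • (1 : Matrix (Fin d) (Fin d) ℝ)).PosSemidef →
      (C₁ • (1 : Matrix (Fin d) (Fin d) ℝ) - H).PosSemidef →
      ∀ S A : Matrix (Fin d ⊕ Fin d) (Fin d ⊕ Fin d) ℝ,
        S = Matrix.fromBlocks (γ • 1) 1 1 1 →
        A = Matrix.fromBlocks 0 (-1) H (γ • 1) →
        S * A + Aᵀ * S = Matrix.fromBlocks ((2 : ℝ) • H) H H ((2 * (γ - 1)) • 1) ∧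
        (S * A + Aᵀ * S -
          Matrix.fromBlocks (m • 1) 0 0 (C₁ • (1 : Matrix (Fin d) (Fin d) ℝ))).PosSemidef ∧
        (S * A + Aᵀ * S - lam • S).PosSemidef := by
  have hγ₀ : 0 < γ + 1 := by linarith
  refine ⟨m / (γ + 1), by positivity, fun H hH hmH hHC S A hS hA => ?_⟩
  subst hS hA
  rw [fromBlocks_mul_add_transpose_mul_fromBlocks hH]
  have hgap := posSemidef_fromBlocks_two_smul_sub_fromBlocks_smul_one hm.le hγ hmH hHC
  have hshift := posSemidef_fromBlocks_smul_one_sub_smul_fromBlocks (n := Fin d) (a := m)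
    (b := C₁) (γ := γ) (by positivity) (div_mul_cancel₀ m hγ₀.ne').le
    (by rw [← mul_div_assoc, div_le_iff₀ hγ₀]; nlinarith)
  exact ⟨rfl, hgap, by simpa only [sub_add_sub_cancel] using hgap.add hshift⟩

/-- Let `d ≥ 1`, `0 < m ≤ C₁`, `γ ≥ C₁ + 1`, and let
`S = [[γI, I],[I, I]]`. There exists `λ > 0` depending only on `m, C₁, γ` such that for every
symmetric `H` with `mI ⪯ H ⪯ C₁I`, the matrix `A = [[0, −I],[H, γI]]` satisfies
`SA + AᵀS = [[2H, H],[H, 2(γ−1)I]] ⪰ [[mI, 0],[0, C₁I]]` and `SA + AᵀS − λS ⪰ 0`. -/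
theorem statement3 (d : ℕ) (hd : 1 ≤ d) (m C₁ γ : ℝ) (hm : 0 < m) (hmC : m ≤ C₁)
    (hγ : C₁ + 1 ≤ γ) :
    ∃ lam > (0 : ℝ), ∀ H : Matrix (Fin d) (Fin d) ℝ, H.IsSymm →
      (H - m • (1 : Matrix (Fin d) (Fin d) ℝ)).PosSemidef →
      (C₁ • (1 : Matrix (Fin d) (Fin d) ℝ) - H).PosSemidef →
      ∀ S A : Matrix (Fin d ⊕ Fin d) (Fin d ⊕ Fin d) ℝ,
        S = Matrix.fromBlocks (γ • 1) 1 1 1 →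
        A = Matrix.fromBlocks 0 (-1) H (γ • 1) →
        S * A + Aᵀ * S = Matrix.fromBlocks ((2 : ℝ) • H) H H ((2 * (γ - 1)) • 1) ∧
        (S * A + Aᵀ * S -
          Matrix.fromBlocks (m • 1) 0 0 (C₁ • (1 : Matrix (Fin d) (Fin d) ℝ))).PosSemidef ∧
        (S * A + Aᵀ * S - lam • S).PosSemidef :=
  statement3_general d m C₁ γ hm hmC hγ
end

section
/- Let d ≥ 1, 0 < m ≤ C₁, and γ ≥ C₁ + 1. Let H : [0,∞) → ℝ^{d×d} be continuous with H(t) symmetric and mI_d ⪯ H(t) ⪯ C₁I_d for every t ≥ 0. Let Q, P : [0,∞) → ℝ^{d×d} be differentiable with Q'(t) = P(t) and P'(t) = −H(t)Q(t) − γP(t) for all t ≥ 0. Then there exist constants C, λ > 0, depending only on m, C₁ and γ, such that ‖Q(t)‖_F + ‖P(t)‖_F ≤ C e^{−λt}(‖Q(0)‖_F + ‖P(0)‖_F) for all t ≥ 0. -/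
/-!
The quadratic form `V(q, p) = γ‖q‖² + 2⟪q, p⟫ + ‖p‖²` is a Lyapunov function for the damped
system `q' = p`, `p' = -A q - γ p` whenever `m ≤ A ≤ C₁` in the Loewner order and `γ ≥ C₁ + 1`:
along solutions `V' = -2⟪A q, q⟫ - 2⟪A q, p⟫ - 2(γ - 1)‖p‖²`, and bounding the cross term by
positivity of `A` gives `V' ≤ -m (‖q‖² + ‖p‖²) ≤ -(m / (γ + 1)) V`. Grönwall makes `V` decay
exponentially, and `V` is comparable to `‖q‖² + ‖p‖²`. Matrices with the Frobenius inner product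
form a Hilbert space on which left multiplication by `H(t)` is such an operator `A`.
-/

open Real Set
open scoped RealInnerProductSpace ComplexOrder

attribute [local instance] Matrix.frobeniusNormedAddCommGroup Matrix.frobeniusNormedSpace

theorem le_mul_exp_of_hasDerivWithinAt_le {f f' : ℝ → ℝ} {μ t : ℝ}
    (hf : ∀ τ ≥ 0, HasDerivWithinAt f (f' τ) (Ici 0) τ) (hf' : ∀ τ ≥ 0, f' τ ≤ -μ * f τ)
    (ht : 0 ≤ t) : f t ≤ f 0 * exp (-μ * t) := by
  have hcont : ContinuousOn f (Icc 0 t) := fun τ hτ ↦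
    (hf τ hτ.1).continuousWithinAt.mono Icc_subset_Ici_self
  have := le_gronwallBound_of_liminf_deriv_right_le (K := -μ) (ε := 0) hcont
    (fun τ hτ r hr ↦ ((hf τ hτ.1).mono (Ici_subset_Ici.2 hτ.1)).liminf_right_slope_le hr) le_rfl
    (fun τ hτ ↦ by rw [add_zero]; exact hf' τ hτ.1) t ⟨ht, le_rfl⟩
  simpa [gronwallBound_ε0] using this

lemma add_le_sqrt_two_mul_of_sq_add_sq_le {a b c d k : ℝ} (ha : 0 ≤ a) (hb : 0 ≤ b)
    (hc : 0 ≤ c) (hd : 0 ≤ d) (hk : 0 ≤ k) (h : a ^ 2 + b ^ 2 ≤ k ^ 2 * (c ^ 2 + d ^ 2)) :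
    a + b ≤ √2 * k * (c + d) := by
  refine (pow_le_pow_iff_left₀ (by positivity) (by positivity) two_ne_zero).1 ?_
  calc (a + b) ^ 2 ≤ 2 * (a ^ 2 + b ^ 2) := by nlinarith [sq_nonneg (a - b)]
    _ ≤ 2 * k ^ 2 * (c + d) ^ 2 := by nlinarith [mul_nonneg (sq_nonneg k) (mul_nonneg hc hd)]
    _ = (√2 * k * (c + d)) ^ 2 := by rw [mul_pow, mul_pow, sq_sqrt zero_le_two]

section DampedOscillator

variable {E : Type*} [NormedAddCommGroup E] [InnerProductSpace ℝ E]

lemma LinearMap.inner_map_self_le_of_le {A B : E →ₗ[ℝ] E} (h : A ≤ B) (x : E) :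
    ⟪A x, x⟫ ≤ ⟪B x, x⟫ := by
  have := ((LinearMap.le_def A B).1 h).inner_nonneg_left x
  rwa [LinearMap.sub_apply, inner_sub_left, sub_nonneg] at this

lemma LinearMap.IsPositive.neg_two_mul_inner_le {A : E →ₗ[ℝ] E} (hA : A.IsPositive) (x y : E) :
    -(2 * ⟪A x, y⟫) ≤ ⟪A x, x⟫ + ⟪A y, y⟫ := by
  have h := hA.inner_nonneg_left (x + y)
  have hsymm : ⟪A y, x⟫ = ⟪A x, y⟫ := by rw [hA.isSymmetric, real_inner_comm]
  simp only [map_add, inner_add_left, inner_add_right] at h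
  linarith

def dampedEnergy (γ : ℝ) (q p : E) : ℝ := γ * ‖q‖ ^ 2 + 2 * ⟪q, p⟫ + ‖p‖ ^ 2

lemma dampedEnergy_le {γ : ℝ} (hγ : 1 ≤ γ) (q p : E) :
    dampedEnergy γ q p ≤ (γ + 1) * (‖q‖ ^ 2 + ‖p‖ ^ 2) := by
  have := two_mul_le_add_sq ‖q‖ ‖p‖
  have := real_inner_le_norm q p
  unfold dampedEnergy
  nlinarith [mul_nonneg (sub_nonneg.2 hγ) (sq_nonneg ‖p‖)]

-- `2 (γ + 1) V - 2 (γ - 1) (‖q‖² + ‖p‖²) = ‖(γ + 1) q + 2 p‖² + (γ - 1)² ‖q‖²`.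
lemma sub_one_mul_le_dampedEnergy (γ : ℝ) (q p : E) :
    (γ - 1) * (‖q‖ ^ 2 + ‖p‖ ^ 2) ≤ (γ + 1) * dampedEnergy γ q p := by
  have h := norm_add_sq_real ((γ + 1) • q) ((2 : ℝ) • p)
  simp only [norm_smul, real_inner_smul_left, real_inner_smul_right, Real.norm_eq_abs, mul_pow,
    sq_abs] at h
  unfold dampedEnergy
  nlinarith [norm_nonneg ((γ + 1) • q + (2 : ℝ) • p), sq_nonneg (γ - 1), sq_nonneg ‖q‖]

lemma hasDerivWithinAt_dampedEnergy {Q P : ℝ → E} {A : E →ₗ[ℝ] E} {γ t : ℝ} {s : Set ℝ}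
    (hQ : HasDerivWithinAt Q (P t) s t) (hP : HasDerivWithinAt P (-A (Q t) - γ • P t) s t) :
    HasDerivWithinAt (fun τ ↦ dampedEnergy γ (Q τ) (P τ))
      (-2 * ⟪A (Q t), Q t⟫ - 2 * ⟪A (Q t), P t⟫ - 2 * (γ - 1) * ‖P t‖ ^ 2) s t := by
  refine (((hQ.norm_sq.const_mul γ).add ((hQ.inner ℝ hP).const_mul 2)).add
    hP.norm_sq).congr_deriv ?_
  simp only [inner_sub_right, inner_neg_right, real_inner_smul_right, real_inner_self_eq_norm_sq,
    real_inner_comm (A (Q t))]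
  ring

lemma dampedEnergy_deriv_le {m C₁ γ : ℝ} (hm : 0 ≤ m) (hmC : m ≤ C₁) (hγ : C₁ + 1 ≤ γ)
    {A : E →ₗ[ℝ] E} (hmA : m • 1 ≤ A) (hAC : A ≤ C₁ • 1) (q p : E) :
    -2 * ⟪A q, q⟫ - 2 * ⟪A q, p⟫ - 2 * (γ - 1) * ‖p‖ ^ 2 ≤ -m * (‖q‖ ^ 2 + ‖p‖ ^ 2) := by
  have hA : A.IsPositive := by
    rw [← LinearMap.nonneg_iff_isPositive]
    exact le_trans ((LinearMap.nonneg_iff_isPositive _).2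
      (LinearMap.isPositive_one.smul_of_nonneg hm)) hmA
  have hq := LinearMap.inner_map_self_le_of_le hmA q
  have hp := LinearMap.inner_map_self_le_of_le hAC p
  simp only [LinearMap.smul_apply, Module.End.one_apply, real_inner_smul_left,
    real_inner_self_eq_norm_sq] at hq hp
  have := hA.neg_two_mul_inner_le q p
  nlinarith [sq_nonneg ‖p‖]

theorem dampedEnergy_le_mul_exp {m C₁ γ : ℝ} (hm : 0 ≤ m) (hmC : m ≤ C₁) (hγ : C₁ + 1 ≤ γ)
    {A : ℝ → E →ₗ[ℝ] E} {Q P : ℝ → E} (hmA : ∀ t ≥ 0, m • 1 ≤ A t)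
    (hAC : ∀ t ≥ 0, A t ≤ C₁ • 1) (hQ : ∀ t ≥ 0, HasDerivWithinAt Q (P t) (Ici 0) t)
    (hP : ∀ t ≥ 0, HasDerivWithinAt P (-A t (Q t) - γ • P t) (Ici 0) t) {t : ℝ} (ht : 0 ≤ t) :
    dampedEnergy γ (Q t) (P t) ≤ dampedEnergy γ (Q 0) (P 0) * exp (-(m / (γ + 1)) * t) := by
  refine le_mul_exp_of_hasDerivWithinAt_le
    (fun τ hτ ↦ hasDerivWithinAt_dampedEnergy (hQ τ hτ) (hP τ hτ)) (fun τ hτ ↦ ?_) ht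
  have hγ1 : 1 ≤ γ := by linarith
  calc _ ≤ -m * (‖Q τ‖ ^ 2 + ‖P τ‖ ^ 2) :=
        dampedEnergy_deriv_le hm hmC hγ (hmA τ hτ) (hAC τ hτ) (Q τ) (P τ)
    _ = -(m / (γ + 1)) * ((γ + 1) * (‖Q τ‖ ^ 2 + ‖P τ‖ ^ 2)) := by
        field_simp
    _ ≤ -(m / (γ + 1)) * dampedEnergy γ (Q τ) (P τ) :=
        mul_le_mul_of_nonpos_left (dampedEnergy_le hγ1 _ _)
          (neg_nonpos.2 (div_nonneg hm (by linarith)))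

theorem norm_add_norm_le_of_dampedOscillator {m C₁ γ : ℝ} (hm : 0 < m) (hmC : m ≤ C₁)
    (hγ : C₁ + 1 ≤ γ) {A : ℝ → E →ₗ[ℝ] E} {Q P : ℝ → E} (hmA : ∀ t ≥ 0, m • 1 ≤ A t)
    (hAC : ∀ t ≥ 0, A t ≤ C₁ • 1)
    (hQ : ∀ t ≥ 0, HasDerivWithinAt Q (P t) (Ici 0) t)
    (hP : ∀ t ≥ 0, HasDerivWithinAt P (-A t (Q t) - γ • P t) (Ici 0) t) {t : ℝ} (ht : 0 ≤ t) :
    ‖Q t‖ + ‖P t‖ ≤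
      √2 * √((γ + 1) ^ 2 / (γ - 1)) * exp (-(m / (γ + 1) / 2) * t) * (‖Q 0‖ + ‖P 0‖) := by
  have hγ1 : 0 < γ - 1 := by linarith
  set e := exp (-(m / (γ + 1)) * t)
  have hsq : ‖Q t‖ ^ 2 + ‖P t‖ ^ 2 ≤ (γ + 1) ^ 2 / (γ - 1) * e * (‖Q 0‖ ^ 2 + ‖P 0‖ ^ 2) := by
    refine le_of_mul_le_mul_left ?_ hγ1
    calc (γ - 1) * (‖Q t‖ ^ 2 + ‖P t‖ ^ 2) ≤ (γ + 1) * dampedEnergy γ (Q t) (P t) := sub_one_mul_le_dampedEnergy γ _ _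
      _ ≤ (γ + 1) * (dampedEnergy γ (Q 0) (P 0) * e) :=
          mul_le_mul_of_nonneg_left (dampedEnergy_le_mul_exp hm.le hmC hγ hmA hAC hQ hP ht)
            (by linarith)
      _ ≤ (γ + 1) * ((γ + 1) * (‖Q 0‖ ^ 2 + ‖P 0‖ ^ 2) * e) :=
          mul_le_mul_of_nonneg_left (mul_le_mul_of_nonneg_right
            (dampedEnergy_le (by linarith) _ _) (exp_pos _).le) (by linarith)
      _ = _ := by field_simp
  have hk : (√((γ + 1) ^ 2 / (γ - 1)) * exp (-(m / (γ + 1) / 2) * t)) ^ 2 =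
      (γ + 1) ^ 2 / (γ - 1) * e := by
    rw [mul_pow, sq_sqrt (by positivity), ← exp_nat_mul]
    congr 2
    ring
  refine (add_le_sqrt_two_mul_of_sq_add_sq_le (c := ‖Q 0‖) (d := ‖P 0‖)
    (k := √((γ + 1) ^ 2 / (γ - 1)) * exp (-(m / (γ + 1) / 2) * t)) (norm_nonneg _)
    (norm_nonneg _) (norm_nonneg _) (norm_nonneg _) (by positivity) ?_).trans_eq (by ring)
  rwa [hk]

end DampedOscillator

namespace Matrix

variable {𝕜 m n : Type*} [RCLike 𝕜] [Fintype m] [Fintype n]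

lemma re_trace_conjTranspose_mul_self (X : Matrix m n 𝕜) :
    RCLike.re (Xᴴ * X).trace = ∑ i, ∑ j, ‖X i j‖ ^ 2 := by
  simp only [trace, diag, mul_apply, conjTranspose_apply, RCLike.star_def, RCLike.conj_mul,
    map_sum]
  rw [Finset.sum_comm]
  norm_cast

-- Built on Mathlib's Frobenius norm rather than through `InnerProductSpace.ofCore`, so that the
-- norm it induces is the Frobenius norm instance itself.
noncomputable abbrev frobeniusInnerProductSpace : InnerProductSpace 𝕜 (Matrix m n 𝕜) where
  inner X Y := (Xᴴ * Y).trace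
  norm_sq_eq_re_inner X := by
    rw [re_trace_conjTranspose_mul_self, frobenius_norm_def, ← Real.sqrt_eq_rpow]
    simp only [Real.rpow_two]
    exact Real.sq_sqrt (by positivity)
  conj_inner_symm X Y := by
    rw [← RCLike.star_def, ← trace_conjTranspose, conjTranspose_mul, conjTranspose_conjTranspose]
  add_left X Y Z := by rw [conjTranspose_add, Matrix.add_mul, trace_add]
  smul_left X Y r := by rw [conjTranspose_smul, Matrix.smul_mul, trace_smul]; rfl

attribute [local instance] frobeniusInnerProductSpace

lemma frobenius_inner_def (X Y : Matrix m n 𝕜) : inner 𝕜 X Y = (Xᴴ * Y).trace := rfl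

variable [DecidableEq n]

lemma PosSemidef.isPositive_mulLeft {B : Matrix n n 𝕜} (hB : B.PosSemidef) :
    (LinearMap.mulLeft 𝕜 B : Matrix n n 𝕜 →ₗ[𝕜] Matrix n n 𝕜).IsPositive := by
  refine (LinearMap.isPositive_iff _).2 ⟨fun X Y ↦ ?_, fun X ↦ ?_⟩
  · simp only [LinearMap.mulLeft_apply, frobenius_inner_def, conjTranspose_mul, hB.isHermitian.eq,
      Matrix.mul_assoc]
  · simp only [LinearMap.mulLeft_apply, frobenius_inner_def, conjTranspose_mul, hB.isHermitian.eq]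
    exact (hB.conjTranspose_mul_mul_same X).trace_nonneg

lemma mulLeft_le_mulLeft {B C : Matrix n n 𝕜} (h : (C - B).PosSemidef) :
    (LinearMap.mulLeft 𝕜 B : Matrix n n 𝕜 →ₗ[𝕜] Matrix n n 𝕜) ≤ LinearMap.mulLeft 𝕜 C := by
  rw [LinearMap.le_def]
  convert h.isPositive_mulLeft using 1
  ext X : 1
  simp [Matrix.sub_mul]

lemma mulLeft_smul_one (c : 𝕜) :
    LinearMap.mulLeft 𝕜 (c • 1 : Matrix n n 𝕜) = c • 1 := by
  ext X : 1
  simp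

end Matrix

attribute [local instance] Matrix.frobeniusInnerProductSpace

theorem statement4_general (d : ℕ) (m C₁ γ : ℝ) (hm : 0 < m) (hmC : m ≤ C₁)
    (hγ : C₁ + 1 ≤ γ) :
    ∃ C > (0 : ℝ), ∃ lam > (0 : ℝ), ∀ H Q P : ℝ → Matrix (Fin d) (Fin d) ℝ,
      ContinuousOn H (Set.Ici 0) →
      (∀ t ≥ (0 : ℝ), (H t).IsSymm) →
      (∀ t ≥ (0 : ℝ), (H t - m • (1 : Matrix (Fin d) (Fin d) ℝ)).PosSemidef) →
      (∀ t ≥ (0 : ℝ), (C₁ • (1 : Matrix (Fin d) (Fin d) ℝ) - H t).PosSemidef) →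
      (∀ t ≥ (0 : ℝ), HasDerivWithinAt Q (P t) (Set.Ici 0) t) →
      (∀ t ≥ (0 : ℝ), HasDerivWithinAt P (-(H t * Q t) - γ • P t) (Set.Ici 0) t) →
      ∀ t ≥ (0 : ℝ), ‖Q t‖ + ‖P t‖ ≤ C * Real.exp (-lam * t) * (‖Q 0‖ + ‖P 0‖) := by
  have hγ1 : 0 < γ - 1 := by linarith
  have hγ2 : 0 < γ + 1 := by linarith
  refine ⟨√2 * √((γ + 1) ^ 2 / (γ - 1)),
    mul_pos (sqrt_pos.2 two_pos) (sqrt_pos.2 (div_pos (pow_pos hγ2 2) hγ1)),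
    m / (γ + 1) / 2, div_pos (div_pos hm hγ2) two_pos, ?_⟩
  intro H Q P _ _ hlow hupp hQ hP t ht
  exact norm_add_norm_le_of_dampedOscillator (A := fun τ ↦ LinearMap.mulLeft ℝ (H τ)) hm hmC hγ
    (fun τ hτ ↦ (Matrix.mulLeft_smul_one m).symm.trans_le (Matrix.mulLeft_le_mulLeft (hlow τ hτ)))
    (fun τ hτ ↦ (Matrix.mulLeft_le_mulLeft (hupp τ hτ)).trans_eq (Matrix.mulLeft_smul_one C₁))
    hQ hP ht

/-- exponential decay of the tangent process `Q' = P`,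
`P' = −H(t)Q − γP` when `mI ⪯ H(t) ⪯ C₁I` and `γ ≥ C₁ + 1`; the constants `C, λ > 0`
depend only on `m, C₁, γ`.  Here `‖·‖` is the Frobenius norm. -/
theorem statement4 (d : ℕ) (hd : 1 ≤ d) (m C₁ γ : ℝ) (hm : 0 < m) (hmC : m ≤ C₁)
    (hγ : C₁ + 1 ≤ γ) :
    ∃ C > (0 : ℝ), ∃ lam > (0 : ℝ), ∀ H Q P : ℝ → Matrix (Fin d) (Fin d) ℝ,
      ContinuousOn H (Set.Ici 0) →
      (∀ t ≥ (0 : ℝ), (H t).IsSymm) →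
      (∀ t ≥ (0 : ℝ), (H t - m • (1 : Matrix (Fin d) (Fin d) ℝ)).PosSemidef) →
      (∀ t ≥ (0 : ℝ), (C₁ • (1 : Matrix (Fin d) (Fin d) ℝ) - H t).PosSemidef) →
      (∀ t ≥ (0 : ℝ), HasDerivWithinAt Q (P t) (Set.Ici 0) t) →
      (∀ t ≥ (0 : ℝ), HasDerivWithinAt P (-(H t * Q t) - γ • P t) (Set.Ici 0) t) →
      ∀ t ≥ (0 : ℝ), ‖Q t‖ + ‖P t‖ ≤ C * Real.exp (-lam * t) * (‖Q 0‖ + ‖P 0‖) :=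
  statement4_general d m C₁ γ hm hmC hγ
end

section
/- Let d ≥ 1, 0 < m ≤ C₁, γ ≥ C₁ + 1 and δ ≥ 0. Let H, H̃ : [0,∞) → ℝ^{d×d} be continuous with H(t), H̃(t) symmetric, mI_d ⪯ H(t) ⪯ C₁I_d and mI_d ⪯ H̃(t) ⪯ C₁I_d, and ‖H(t) − H̃(t)‖_F ≤ δ for all t ≥ 0. Let (Q,P) and (Q̃,P̃) be differentiable matrix-valued solutions of Q' = P, P' = −H(t)Q − γP and Q̃' = P̃, P̃' = −H̃(t)Q̃ − γP̃ with the same initial values Q(0) = Q̃(0), P(0) = P̃(0). Then there exist constants C, λ > 0, depending only on m, C₁ and γ, such that ‖Q(t) − Q̃(t)‖_F + ‖P(t) − P̃(t)‖_F ≤ C e^{−λt}(‖Q(0)‖_F + ‖P(0)‖_F)·δ for all t ≥ 0. -/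
/-!
With `x = Q` and `y = P + Q` the tangent equation reads `x' = -x + y`,
`y' = -(γ - 1) y + ((γ - 1) I - H) x`, and `mI ⪯ H ⪯ C₁I ⪯ (γ - 1) I` bounds the action of
`(γ - 1) I - H` on the Frobenius norm by `γ - 1 - m`. Hence the right Dini derivative of the
weighted norm `(γ - 1 - m/2) ‖x‖ + ‖y‖` is at most `-(m/2) (‖x‖ + ‖y‖)` plus the forcing, and
Grönwall's inequality gives decay at rate `μ = m / (4γ)`. Applied to `(Q̃, P̃)` this makes `Q̃`
decay; the difference `(Q - Q̃, P - P̃)` solves the same equation for `H`, starts at zero, and is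
forced by `(H̃ - H) Q̃`, of norm at most `δ ‖Q̃‖`.
-/

attribute [local instance] Matrix.frobeniusNormedAddCommGroup Matrix.frobeniusNormedSpace

namespace Matrix

theorem frobenius_norm_sq_eq_sum_dotProduct {m n : Type*} [Fintype m] [Fintype n]
    (M : Matrix m n ℝ) :
    ‖M‖ ^ 2 = ∑ j, Mᵀ j ⬝ᵥ Mᵀ j := by
  rw [frobenius_norm_def, ← Real.rpow_natCast, ← Real.rpow_mul (by positivity), Finset.sum_comm]
  norm_num [dotProduct, sq]

variable {n : Type*} [Fintype n] [DecidableEq n]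

theorem PosSemidef.mulVec_dotProduct_mulVec_le {A : Matrix n n ℝ} {c : ℝ} (hA : A.PosSemidef)
    (hAc : (c • 1 - A).PosSemidef) (x : n → ℝ) :
    A *ᵥ x ⬝ᵥ A *ᵥ x ≤ c ^ 2 * (x ⬝ᵥ x) := by
  set w := A *ᵥ x
  have hle (v : n → ℝ) : v ⬝ᵥ A *ᵥ v ≤ c * (v ⬝ᵥ v) := by
    simpa [sub_mulVec, smul_mulVec, one_mulVec, dotProduct_smul] using
      hAc.dotProduct_mulVec_nonneg v
  have hnonneg (v : n → ℝ) : 0 ≤ v ⬝ᵥ A *ᵥ v := by simpa using hA.dotProduct_mulVec_nonneg v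
  have hsymm : x ⬝ᵥ A *ᵥ w = w ⬝ᵥ w := by
    rw [dotProduct_mulVec, ← mulVec_transpose, ← conjTranspose_eq_transpose_of_trivial,
      hA.isHermitian.eq, dotProduct_comm]
  have hcs := (toBilin' A).apply_mul_apply_le_of_forall_zero_le
    (by simpa only [toBilin'_apply'] using hnonneg) x w
  simp only [toBilin'_apply', hsymm, show w ⬝ᵥ A *ᵥ x = w ⬝ᵥ w from rfl] at hcs
  have hw : 0 ≤ w ⬝ᵥ w := by simpa using dotProduct_star_self_nonneg w
  have hprod : (w ⬝ᵥ w) * (w ⬝ᵥ w) ≤ c ^ 2 * (x ⬝ᵥ x) * (w ⬝ᵥ w) := by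
    calc _ ≤ (x ⬝ᵥ A *ᵥ x) * (w ⬝ᵥ A *ᵥ w) := hcs
      _ ≤ (c * (x ⬝ᵥ x)) * (c * (w ⬝ᵥ w)) :=
        mul_le_mul (hle x) (hle w) (hnonneg w) ((hnonneg x).trans (hle x))
      _ = _ := by ring
  rcases hw.eq_or_lt with hw0 | hwpos
  · rw [← hw0]
    have hx : 0 ≤ x ⬝ᵥ x := by simpa using dotProduct_star_self_nonneg x
    positivity
  · exact le_of_mul_le_mul_right hprod hwpos

theorem PosSemidef.frobenius_norm_mul_le {m : Type*} [Fintype m] {A : Matrix n n ℝ} {c : ℝ}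
    (hc : 0 ≤ c) (hA : A.PosSemidef) (hAc : (c • 1 - A).PosSemidef) (B : Matrix n m ℝ) :
    ‖A * B‖ ≤ c * ‖B‖ := by
  have hcol (j : m) : (A * B)ᵀ j = A *ᵥ Bᵀ j := by
    ext i; simp [mulVec, dotProduct, mul_apply]
  refine le_of_sq_le_sq ?_ (by positivity)
  rw [mul_pow, frobenius_norm_sq_eq_sum_dotProduct, frobenius_norm_sq_eq_sum_dotProduct,
    Finset.mul_sum]
  exact Finset.sum_le_sum fun j _ ↦ hcol j ▸ hA.mulVec_dotProduct_mulVec_le hAc (Bᵀ j)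

theorem frobenius_norm_smul_sub_mul_le {m : Type*} [Fintype m] {A : Matrix n n ℝ} {a C b : ℝ}
    (hab : a ≤ b) (hCb : C ≤ b) (haA : (A - a • 1).PosSemidef) (hAC : (C • 1 - A).PosSemidef)
    (B : Matrix n m ℝ) : ‖b • B - A * B‖ ≤ (b - a) * ‖B‖ := by
  have hpsd : (b • 1 - A).PosSemidef := by
    rw [show b • 1 - A = (C • 1 - A) + (b - C) • (1 : Matrix n n ℝ) by module]
    exact hAC.add (PosSemidef.one.smul (sub_nonneg.mpr hCb))
  rw [show b • B - A * B = (b • 1 - A) * B by rw [Matrix.sub_mul, Matrix.smul_mul, Matrix.one_mul]]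
  refine hpsd.frobenius_norm_mul_le (sub_nonneg.mpr hab) ?_ B
  rwa [show (b - a) • 1 - (b • 1 - A) = A - a • (1 : Matrix n n ℝ) by module]

end Matrix

open Filter Set Topology Real

theorem HasDerivWithinAt.eventually_norm_sub_norm_le {E : Type*} [NormedAddCommGroup E]
    [NormedSpace ℝ E] {f : ℝ → E} {t c ε : ℝ} {w : E}
    (hf : HasDerivWithinAt f (c • f t + w) (Ici t) t) (hε : 0 < ε) :
    ∀ᶠ z in 𝓝[>] t, ‖f z‖ - ‖f t‖ ≤ (z - t) * (c * ‖f t‖ + ‖w‖ + ε) := by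
  have hrem : ∀ᶠ z in 𝓝[>] t, ‖f z - f t - (z - t) • (c • f t + w)‖ ≤ ε * ‖z - t‖ :=
    nhdsWithin_mono _ Ioi_subset_Ici_self ((hasDerivWithinAt_iff_isLittleO.mp hf).def hε)
  have hcoef : ∀ᶠ z in 𝓝[>] t, 0 < 1 + (z - t) * c := by
    have : Tendsto (fun z ↦ 1 + (z - t) * c) (𝓝[>] t) (𝓝 1) :=
      tendsto_nhdsWithin_of_tendsto_nhds (by simpa using (by fun_prop : Continuous
        (fun z : ℝ ↦ 1 + (z - t) * c)).tendsto t)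
    exact this.eventually_const_lt one_pos
  filter_upwards [hrem, hcoef, self_mem_nhdsWithin] with z hz hcz (htz : t < z)
  have hzt : 0 < z - t := sub_pos.mpr htz
  set r := f z - f t - (z - t) • (c • f t + w)
  have hnorm : ‖f z‖ ≤ (1 + (z - t) * c) * ‖f t‖ + (z - t) * ‖w‖ + ε * (z - t) := by
    calc ‖f z‖ = ‖(1 + (z - t) * c) • f t + (z - t) • w + r‖ := by congr 1; module
      _ ≤ ‖(1 + (z - t) * c) • f t‖ + ‖(z - t) • w‖ + ‖r‖ := norm_add₃_le
      _ ≤ _ := by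
        rw [norm_smul, norm_smul, Real.norm_of_nonneg hcz.le, Real.norm_of_nonneg hzt.le,
          ← Real.norm_of_nonneg hzt.le]
        gcongr
  nlinarith

theorem gronwallBound_le_of_neg {δ K ε x : ℝ} (hδ : 0 ≤ δ) (hK : K < 0) (hε : 0 ≤ ε)
    (hx : 0 ≤ x) : gronwallBound δ K ε x ≤ δ + ε / -K := by
  have hexp : exp (K * x) ≤ 1 := exp_le_one_iff.mpr (mul_nonpos_of_nonpos_of_nonneg hK.le hx)
  have hεK : 0 ≤ ε / -K := div_nonneg hε (neg_nonneg.mpr hK.le)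
  rw [gronwallBound_of_K_ne_0 hK.ne, show ε / K = -(ε / -K) by rw [div_neg, neg_neg]]
  nlinarith [exp_pos (K * x)]

theorem weighted_norm_le_gronwallBound {E : Type*} [NormedAddCommGroup E] [NormedSpace ℝ E]
    {x y S : ℝ → E} {p q k a K c : ℝ} (ha : 0 ≤ a)
    (hx : ∀ t ≥ 0, HasDerivWithinAt x (p • x t + y t) (Ici 0) t)
    (hy : ∀ t ≥ 0, HasDerivWithinAt y (q • y t + S t) (Ici 0) t)
    (hS : ∀ t ≥ 0, ‖S t‖ ≤ k * ‖x t‖ + c) (hKx : a * p + k ≤ K * a) (hKy : a + q ≤ K)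
    {t : ℝ} (ht : 0 ≤ t) :
    a * ‖x t‖ + ‖y t‖ ≤ gronwallBound (a * ‖x 0‖ + ‖y 0‖) K c t := by
  have hcont {f : ℝ → E} {f' : ℝ → E} (hf : ∀ t ≥ 0, HasDerivWithinAt f (f' t) (Ici 0) t) :
      ContinuousOn (fun s ↦ ‖f s‖) (Icc 0 t) :=
    fun s hs ↦ ((hf s hs.1).continuousWithinAt.mono Icc_subset_Ici_self).norm
  have hdini : ∀ s ∈ Ico 0 t, ∀ r, a * (p * ‖x s‖ + ‖y s‖) + (q * ‖y s‖ + ‖S s‖) < r →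
      ∃ᶠ z in 𝓝[>] s, (z - s)⁻¹ * (a * ‖x z‖ + ‖y z‖ - (a * ‖x s‖ + ‖y s‖)) < r := by
    intro s hs r hr
    obtain ⟨ε, hε, hεr⟩ := exists_pos_mul_lt (sub_pos.mpr hr) (a + 1)
    have hxs := ((hx s hs.1).mono (Ici_subset_Ici.mpr hs.1)).eventually_norm_sub_norm_le hε
    have hys := ((hy s hs.1).mono (Ici_subset_Ici.mpr hs.1)).eventually_norm_sub_norm_le hε
    refine (hxs.and (hys.and self_mem_nhdsWithin)).frequently.mono ?_
    rintro z ⟨hxz, hyz, hsz : s < z⟩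
    rw [inv_mul_lt_iff₀ (sub_pos.mpr hsz)]
    nlinarith [mul_le_mul_of_nonneg_left hxz ha]
  have hbound : ∀ s ∈ Ico 0 t, a * (p * ‖x s‖ + ‖y s‖) + (q * ‖y s‖ + ‖S s‖) ≤
      K * (a * ‖x s‖ + ‖y s‖) + c := by
    intro s hs
    nlinarith [mul_le_mul_of_nonneg_right hKx (norm_nonneg (x s)),
      mul_le_mul_of_nonneg_right hKy (norm_nonneg (y s)), hS s hs.1]
  simpa using le_gronwallBound_of_liminf_deriv_right_le
    ((continuousOn_const.mul (hcont hx)).add (hcont hy)) hdini le_rfl hbound t ⟨ht, le_rfl⟩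

theorem norm_add_norm_le_one_add_two_div_mul {E : Type*} [SeminormedAddCommGroup E] {a : ℝ}
    (ha : 0 < a) (q p : E) : ‖q‖ + ‖p‖ ≤ (1 + 2 / a) * (a * ‖q‖ + ‖p + q‖) := by
  have hp : ‖p‖ ≤ ‖p + q‖ + ‖q‖ := by simpa using norm_sub_le (p + q) q
  have hq : (1 + 2 / a) * (a * ‖q‖) = (a + 2) * ‖q‖ := by field_simp
  nlinarith [norm_nonneg q, norm_nonneg (p + q), div_pos two_pos ha]

theorem weighted_norm_le_of_dampedTangent {n k : Type*} [Fintype n] [DecidableEq n] [Fintype k]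
    {H : ℝ → Matrix n n ℝ} {Q P F : ℝ → Matrix n k ℝ} {m C₁ γ μ c : ℝ}
    (hm : 0 < m) (hmC : m ≤ C₁) (hγ : C₁ + 1 ≤ γ) (hμ : 0 < μ) (hμγ : 4 * μ * γ ≤ m)
    (hHm : ∀ t ≥ 0, (H t - m • 1).PosSemidef) (hHC : ∀ t ≥ 0, (C₁ • 1 - H t).PosSemidef)
    (hQ : ∀ t ≥ 0, HasDerivWithinAt Q (P t) (Ici 0) t)
    (hP : ∀ t ≥ 0, HasDerivWithinAt P (-(H t * Q t) - γ • P t + F t) (Ici 0) t)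
    (hF : ∀ t ≥ 0, ‖F t‖ ≤ c * exp (-μ * t)) {t : ℝ} (ht : 0 ≤ t) :
    (γ - 1 - m / 2) * ‖Q t‖ + ‖P t + Q t‖ ≤
      ((γ - m / 2) * (‖Q 0‖ + ‖P 0‖) + c / μ) * exp (-μ * t) := by
  set a := γ - 1 - m / 2 with ha_def
  have ha : 0 < a := by linarith
  have hc : 0 ≤ c := by simpa using (norm_nonneg _).trans (hF 0 le_rfl)
  have hexp (s : ℝ) : HasDerivWithinAt (fun s ↦ exp (μ * s)) (μ * exp (μ * s)) (Ici 0) s := by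
    simpa [mul_comm] using ((hasDerivAt_id s).const_mul μ).exp.hasDerivWithinAt
  -- the integrating factor `exp (μ t)` turns the decaying forcing into a constant one
  have hgron := weighted_norm_le_gronwallBound (x := fun s ↦ exp (μ * s) • Q s)
    (y := fun s ↦ exp (μ * s) • (P s + Q s))
    (S := fun s ↦ exp (μ * s) • ((γ - 1) • Q s - H s * Q s + F s))
    (p := μ - 1) (q := μ + 1 - γ) (k := γ - 1 - m) (K := -μ) (c := c) ha.le
    (fun s hs ↦ ((hexp s).smul (hQ s hs)).congr_deriv (by module))
    (fun s hs ↦ ((hexp s).smul ((hP s hs).add (hQ s hs))).congr_deriv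
      (by rw [Pi.add_apply]; module))
    ?_ (by nlinarith) (by nlinarith) ht
  · have hstart := gronwallBound_le_of_neg (δ := a * ‖Q 0‖ + ‖P 0 + Q 0‖) (by positivity)
      (neg_lt_zero.mpr hμ) hc ht
    simp only [mul_zero, exp_zero, one_smul, neg_neg, norm_smul, norm_of_nonneg (exp_pos _).le]
      at hgron hstart
    have hinit : a * ‖Q 0‖ + ‖P 0 + Q 0‖ ≤ (γ - m / 2) * (‖Q 0‖ + ‖P 0‖) := by
      nlinarith [norm_add_le (P 0) (Q 0), norm_nonneg (Q 0), norm_nonneg (P 0)]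
    have hinv : exp (-μ * t) * exp (μ * t) = 1 := by rw [← exp_add]; simp
    calc a * ‖Q t‖ + ‖P t + Q t‖
        = exp (-μ * t) * (a * (exp (μ * t) * ‖Q t‖) + exp (μ * t) * ‖P t + Q t‖) := by
          linear_combination (-(a * ‖Q t‖) - ‖P t + Q t‖) * hinv
      _ ≤ exp (-μ * t) * ((γ - m / 2) * (‖Q 0‖ + ‖P 0‖) + c / μ) :=
          mul_le_mul_of_nonneg_left (by linarith) (exp_pos _).le
      _ = _ := mul_comm _ _
  · intro s hs
    have hHQ := Matrix.frobenius_norm_smul_sub_mul_le (b := γ - 1) (by linarith) (by linarith)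
      (hHm s hs) (hHC s hs) (Q s)
    have hinv : exp (μ * s) * exp (-μ * s) = 1 := by rw [← exp_add]; simp
    calc ‖exp (μ * s) • ((γ - 1) • Q s - H s * Q s + F s)‖
        = exp (μ * s) * ‖(γ - 1) • Q s - H s * Q s + F s‖ := by
          rw [norm_smul, norm_of_nonneg (exp_pos _).le]
      _ ≤ exp (μ * s) * ((γ - 1 - m) * ‖Q s‖ + c * exp (-μ * s)) := by
          gcongr
          exact (norm_add_le _ _).trans (add_le_add hHQ (hF s hs))
      _ = (γ - 1 - m) * ‖exp (μ * s) • Q s‖ + c := by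
          rw [norm_smul, norm_of_nonneg (exp_pos _).le]
          linear_combination c * hinv

theorem statement5_general (d : ℕ) (m C₁ γ δ : ℝ) (hm : 0 < m) (hmC : m ≤ C₁)
    (hγ : C₁ + 1 ≤ γ) :
    ∃ C > (0 : ℝ), ∃ lam > (0 : ℝ), ∀ H H' Q P Q' P' : ℝ → Matrix (Fin d) (Fin d) ℝ,
      ContinuousOn H (Set.Ici 0) → ContinuousOn H' (Set.Ici 0) →
      (∀ t ≥ (0 : ℝ), (H t).IsSymm) → (∀ t ≥ (0 : ℝ), (H' t).IsSymm) →
      (∀ t ≥ (0 : ℝ), (H t - m • (1 : Matrix (Fin d) (Fin d) ℝ)).PosSemidef) →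
      (∀ t ≥ (0 : ℝ), (C₁ • (1 : Matrix (Fin d) (Fin d) ℝ) - H t).PosSemidef) →
      (∀ t ≥ (0 : ℝ), (H' t - m • (1 : Matrix (Fin d) (Fin d) ℝ)).PosSemidef) →
      (∀ t ≥ (0 : ℝ), (C₁ • (1 : Matrix (Fin d) (Fin d) ℝ) - H' t).PosSemidef) →
      (∀ t ≥ (0 : ℝ), ‖H t - H' t‖ ≤ δ) →
      (∀ t ≥ (0 : ℝ), HasDerivWithinAt Q (P t) (Set.Ici 0) t) →
      (∀ t ≥ (0 : ℝ), HasDerivWithinAt P (-(H t * Q t) - γ • P t) (Set.Ici 0) t) →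
      (∀ t ≥ (0 : ℝ), HasDerivWithinAt Q' (P' t) (Set.Ici 0) t) →
      (∀ t ≥ (0 : ℝ), HasDerivWithinAt P' (-(H' t * Q' t) - γ • P' t) (Set.Ici 0) t) →
      Q 0 = Q' 0 → P 0 = P' 0 →
      ∀ t ≥ (0 : ℝ), ‖Q t - Q' t‖ + ‖P t - P' t‖ ≤
        C * Real.exp (-lam * t) * (‖Q 0‖ + ‖P 0‖) * δ := by
  set a := γ - 1 - m / 2 with ha_def
  set μ := m / (4 * γ) with hμ_def
  have hγ0 : 0 < γ := by linarith
  have ha : 0 < a := by linarith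
  have hμ : 0 < μ := by positivity
  have hμγ : 4 * μ * γ ≤ m := le_of_eq (by rw [hμ_def]; field_simp)
  refine ⟨(1 + 2 / a) * (γ - m / 2) / (a * μ),
    div_pos (mul_pos (by positivity) (by linarith)) (mul_pos ha hμ), μ, hμ, ?_⟩
  intro H H' Q P Q' P' _ _ _ _ hHm hHC hH'm hH'C hHH' hQ hP hQ' hP' hQ0 hP0 t ht
  have hQ'_le (s : ℝ) (hs : 0 ≤ s) :
      ‖Q' s‖ ≤ (γ - m / 2) * (‖Q 0‖ + ‖P 0‖) / a * exp (-μ * s) := by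
    have := weighted_norm_le_of_dampedTangent (F := 0) (c := 0) hm hmC hγ hμ hμγ hH'm hH'C hQ'
      (by simpa using hP') (by simp) hs
    rw [hQ0, hP0, div_mul_eq_mul_div, le_div_iff₀ ha]
    simp only [zero_div, add_zero, ← ha_def] at this
    nlinarith [norm_nonneg (P' s + Q' s)]
  have hdiff := weighted_norm_le_of_dampedTangent (Q := fun s ↦ Q s - Q' s)
    (P := fun s ↦ P s - P' s) (F := fun s ↦ (H' s - H s) * Q' s)
    (c := δ * ((γ - m / 2) * (‖Q 0‖ + ‖P 0‖) / a)) hm hmC hγ hμ hμγ hHm hHC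
    (fun s hs ↦ (hQ s hs).sub (hQ' s hs))
    (fun s hs ↦ ((hP s hs).sub (hP' s hs)).congr_deriv
      (by simp only [Matrix.mul_sub, Matrix.sub_mul]; module))
    (fun s hs ↦ by
      calc ‖(H' s - H s) * Q' s‖ ≤ ‖H' s - H s‖ * ‖Q' s‖ := Matrix.frobenius_norm_mul _ _
        _ ≤ δ * ((γ - m / 2) * (‖Q 0‖ + ‖P 0‖) / a * exp (-μ * s)) :=
          mul_le_mul (norm_sub_rev (H s) _ ▸ hHH' s hs) (hQ'_le s hs) (norm_nonneg _)
            ((norm_nonneg _).trans (hHH' s hs))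
        _ = _ := by ring) ht
  have hzero : ‖Q 0 - Q' 0‖ + ‖P 0 - P' 0‖ = 0 := by simp [hQ0, hP0]
  rw [hzero, mul_zero, zero_add] at hdiff
  calc ‖Q t - Q' t‖ + ‖P t - P' t‖
      ≤ (1 + 2 / a) * (a * ‖Q t - Q' t‖ + ‖(P t - P' t) + (Q t - Q' t)‖) :=
        norm_add_norm_le_one_add_two_div_mul ha _ _
    _ ≤ (1 + 2 / a) * (δ * ((γ - m / 2) * (‖Q 0‖ + ‖P 0‖) / a) / μ * exp (-μ * t)) := by
        gcongr
    _ = _ := by field_simp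

/-- coupling estimate between two tangent processes `Q' = P, P' = −H(t)Q − γP`
and `Q̃' = P̃, P̃' = −H̃(t)Q̃ − γP̃` with the same initial values, when
`mI ⪯ H(t), H̃(t) ⪯ C₁I`, `‖H(t) − H̃(t)‖_F ≤ δ` and `γ ≥ C₁ + 1`; the constants
`C, λ > 0` depend only on `m, C₁, γ`.  Here `‖·‖` is the Frobenius norm. -/
theorem statement5 (d : ℕ) (hd : 1 ≤ d) (m C₁ γ δ : ℝ) (hm : 0 < m) (hmC : m ≤ C₁)
    (hγ : C₁ + 1 ≤ γ) (hδ : 0 ≤ δ) :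
    ∃ C > (0 : ℝ), ∃ lam > (0 : ℝ), ∀ H H' Q P Q' P' : ℝ → Matrix (Fin d) (Fin d) ℝ,
      ContinuousOn H (Set.Ici 0) → ContinuousOn H' (Set.Ici 0) →
      (∀ t ≥ (0 : ℝ), (H t).IsSymm) → (∀ t ≥ (0 : ℝ), (H' t).IsSymm) →
      (∀ t ≥ (0 : ℝ), (H t - m • (1 : Matrix (Fin d) (Fin d) ℝ)).PosSemidef) →
      (∀ t ≥ (0 : ℝ), (C₁ • (1 : Matrix (Fin d) (Fin d) ℝ) - H t).PosSemidef) →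
      (∀ t ≥ (0 : ℝ), (H' t - m • (1 : Matrix (Fin d) (Fin d) ℝ)).PosSemidef) →
      (∀ t ≥ (0 : ℝ), (C₁ • (1 : Matrix (Fin d) (Fin d) ℝ) - H' t).PosSemidef) →
      (∀ t ≥ (0 : ℝ), ‖H t - H' t‖ ≤ δ) →
      (∀ t ≥ (0 : ℝ), HasDerivWithinAt Q (P t) (Set.Ici 0) t) →
      (∀ t ≥ (0 : ℝ), HasDerivWithinAt P (-(H t * Q t) - γ • P t) (Set.Ici 0) t) →
      (∀ t ≥ (0 : ℝ), HasDerivWithinAt Q' (P' t) (Set.Ici 0) t) →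
      (∀ t ≥ (0 : ℝ), HasDerivWithinAt P' (-(H' t * Q' t) - γ • P' t) (Set.Ici 0) t) →
      Q 0 = Q' 0 → P 0 = P' 0 →
      ∀ t ≥ (0 : ℝ), ‖Q t - Q' t‖ + ‖P t - P' t‖ ≤
        C * Real.exp (-lam * t) * (‖Q 0‖ + ‖P 0‖) * δ :=
  statement5_general d m C₁ γ δ hm hmC hγ
end

section
/- Let λ, K > 0 and let G : [0,∞) → ℝ be differentiable with G(t) ≥ 0 for all t ≥ 0, G(0) = 0, and G'(t) ≤ −λG(t) + K·√(G(t)) for all t ≥ 0. Then √(G(t)) ≤ K/λ for all t ≥ 0. -/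
/-!
A barrier argument: for any `c > K/λ`, at a time where `G = c²` the differential inequality
gives `G' ≤ c (K - λc) < 0`, so `G`, which starts at `0`, can never cross the level `c²`.
Letting `c` decrease to `K/λ` gives the bound.
-/

open Set

theorem le_of_derivWithin_neg_of_eq {f : ℝ → ℝ} {a M : ℝ}
    (hdiff : ∀ x ≥ a, DifferentiableWithinAt ℝ f (Ici a) x) (ha : f a ≤ M)
    (hlevel : ∀ x ≥ a, f x = M → derivWithin f (Ici a) x < 0) :
    ∀ t ≥ a, f t ≤ M := by
  intro t ht
  have hcont : ContinuousOn f (Icc a t) := fun x hx =>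
    (hdiff x hx.1).continuousWithinAt.mono Icc_subset_Ici_self
  have hderiv : ∀ x ∈ Ico a t, HasDerivWithinAt f (derivWithin f (Ici a) x) (Ici x) x :=
    fun x hx => (hdiff x hx.1).hasDerivWithinAt.mono (Ici_subset_Ici.2 hx.1)
  exact image_le_of_deriv_right_lt_deriv_boundary' (B' := fun _ => 0) hcont hderiv ha
    continuousOn_const (fun x _ => hasDerivWithinAt_const x _ _)
    (fun x hx => hlevel x hx.1) ⟨ht, le_rfl⟩

theorem neg_mul_sq_add_mul_lt_zero {lam K c : ℝ} (hlam : 0 < lam) (hc : K / lam < c)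
    (hc₀ : 0 < c) : -lam * c ^ 2 + K * c < 0 := by
  have hK : K < lam * c := (div_lt_iff₀' hlam).1 hc
  nlinarith

theorem statement6_general (lam K : ℝ) (hlam : 0 < lam) (hK : 0 < K) (G : ℝ → ℝ)
    (hG0 : G 0 = 0)
    (hdiff : ∀ t ≥ (0 : ℝ), DifferentiableWithinAt ℝ G (Set.Ici 0) t)
    (hderiv : ∀ t ≥ (0 : ℝ),
      derivWithin G (Set.Ici 0) t ≤ -lam * G t + K * Real.sqrt (G t)) :
    ∀ t ≥ (0 : ℝ), Real.sqrt (G t) ≤ K / lam := by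
  intro t ht
  refine le_of_forall_gt_imp_ge_of_dense fun c hc => ?_
  have hc₀ : 0 < c := (div_pos hK hlam).trans hc
  have hGc : G t ≤ c ^ 2 := by
    refine le_of_derivWithin_neg_of_eq hdiff (by rw [hG0]; positivity) (fun x hx hGx => ?_) t ht
    calc derivWithin G (Ici 0) x ≤ -lam * c ^ 2 + K * Real.sqrt (c ^ 2) := hGx ▸ hderiv x hx
      _ = -lam * c ^ 2 + K * c := by rw [Real.sqrt_sq hc₀.le]
      _ < 0 := neg_mul_sq_add_mul_lt_zero hlam hc hc₀
  calc Real.sqrt (G t) ≤ Real.sqrt (c ^ 2) := Real.sqrt_le_sqrt hGc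
    _ = c := Real.sqrt_sq hc₀.le

/-- if `G : [0,∞) → ℝ` is differentiable with `G ≥ 0`, `G(0) = 0` and
`G'(t) ≤ −λG(t) + K·√(G(t))` for all `t ≥ 0`, then `√(G(t)) ≤ K/λ` for all `t ≥ 0`. -/
theorem statement6 (lam K : ℝ) (hlam : 0 < lam) (hK : 0 < K) (G : ℝ → ℝ)
    (hG0 : G 0 = 0)
    (hGnn : ∀ t ≥ (0 : ℝ), 0 ≤ G t)
    (hdiff : ∀ t ≥ (0 : ℝ), DifferentiableWithinAt ℝ G (Set.Ici 0) t)
    (hderiv : ∀ t ≥ (0 : ℝ),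
      derivWithin G (Set.Ici 0) t ≤ -lam * G t + K * Real.sqrt (G t)) :
    ∀ t ≥ (0 : ℝ), Real.sqrt (G t) ≤ K / lam :=
  statement6_general lam K hlam hK G hG0 hdiff hderiv
end
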